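/- arXiv:1902.02755 — 5 statements merged into one kernel-verified Lean document; each statement's English description precedes it below -/
import Mathlib

section
/- For every downward-closed finite collection of episodes 𝒢, the episode machine M(𝒢) is monotonic: every sequence covering a state of M(𝒢) also covers each parent of that state. -/
open scoped Classical

/-- An episode: a finite DAG with nodes labeled by symbols of `σ`. -/
structure Episode (σ : Type) where
  nodes : Finset ℕ
  edges : Finset (ℕ × ℕ)
  lab : (v : ℕ) → v ∈ nodes → σ
  edges_mem : ∀ e ∈ edges, e.1 ∈ nodes ∧ e.2 ∈ nodes
  acyclic : ∀ v, ¬ Relation.TransGen (fun u w => (u, w) ∈ edges) v v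

/-- `s` covers the episode `G`: an injective map of nodes to (0-based) positions of `s`
matching labels and respecting the edge order. -/
def Covers {σ : Type} (s : List σ) (G : Episode σ) : Prop :=
  ∃ f : ℕ → ℕ, Set.InjOn f ↑G.nodes ∧
    (∀ v (hv : v ∈ G.nodes), s[f v]? = some (G.lab v hv)) ∧
    (∀ e ∈ G.edges, f e.1 < f e.2)

/-- The contiguous sub-window `s[i,j]` (1-based, inclusive). -/
def window {α : Type} (s : List α) (i j : ℕ) : List α := (s.take j).drop (i - 1)

/-- `s` is a minimal window for `G`: `s` covers `G` but no proper contiguous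
sub-window `s[i,j]` with `(i,j) ≠ (1,L)` covers `G`. -/
def IsMinWindow {σ : Type} (s : List σ) (G : Episode σ) : Prop :=
  Covers s G ∧ ∀ i j : ℕ, 1 ≤ i → i ≤ j → j ≤ s.length → (i, j) ≠ (1, s.length) →
    ¬ Covers (window s i j) G

/-- `H` is a sub-episode of `G`: a subset of the nodes and a subset of the edges,
keeping the labels. -/
def SubEpisode {σ : Type} (H G : Episode σ) : Prop :=
  H.nodes ⊆ G.nodes ∧ H.edges ⊆ G.edges ∧
    ∀ v (hv : v ∈ H.nodes) (hg : v ∈ G.nodes), H.lab v hv = G.lab v hg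

/-- A machine over alphabet `σ` with states in `Q`: a set of labeled edges together with a
designated initial state. (Being a DAG with the initial state a source is expressed by the
predicates `Machine.Acyclic` and `Machine.InitSource`.) -/
structure Machine (σ : Type) (Q : Type) where
  edges : Finset (Q × σ × Q)
  init : Q

namespace Machine

variable {σ Q : Type}

/-- There is an edge labeled `a` from `w` to `v`. -/
def IsEdge (M : Machine σ Q) (w : Q) (a : σ) (v : Q) : Prop := (w, a, v) ∈ M.edges

/-- `w` is a parent of `v`. -/
def IsParent (M : Machine σ Q) (w v : Q) : Prop := ∃ a, M.IsEdge w a v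

/-- The machine is acyclic (a DAG). -/
def Acyclic (M : Machine σ Q) : Prop :=
  ∀ v, ¬ Relation.TransGen M.IsParent v v

/-- The initial state is a source: it has no incoming edges. -/
def InitSource (M : Machine σ Q) : Prop := ∀ w a, ¬ M.IsEdge w a M.init

/-- `u` is a strict ancestor of `v`. -/
def StrictAncestor (M : Machine σ Q) : Q → Q → Prop := Relation.TransGen M.IsParent

/-- `M.Reach v t`: `t` is the sequence of edge labels along a directed path
from the initial state to `v`. -/
inductive Reach (M : Machine σ Q) : Q → List σ → Prop
  | init : Reach M M.init []
  | step {w v : Q} {a : σ} {t : List σ} : Reach M w t → M.IsEdge w a v → Reach M v (t ++ [a])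

/-- A sequence `s` covers a state `v` if some (not necessarily contiguous) subsequence of
`s` is the label sequence of a directed path from the initial state to `v`. -/
def CoversState (M : Machine σ Q) (s : List σ) (v : Q) : Prop :=
  ∃ t : List σ, M.Reach v t ∧ t.Sublist s

/-- `M` is monotonic: every sequence covering a state covers each parent of that state. -/
def Monotonic (M : Machine σ Q) : Prop :=
  ∀ v w a, M.IsEdge w a v → ∀ s : List σ, M.CoversState s v → M.CoversState s w

/-- `M` is simple: for every state, the labels of its incoming edges are pairwise
distinct. -/
def Simple (M : Machine σ Q) : Prop :=
  ∀ v a w₁ w₂, M.IsEdge w₁ a v → M.IsEdge w₂ a v → w₁ = w₂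

end Machine

/-- A sink of an episode: a node with no outgoing edges. -/
noncomputable def Episode.sinks {σ : Type} (G : Episode σ) : Finset ℕ :=
  G.nodes.filter (fun v => ∀ w, (v, w) ∉ G.edges)

/-- `G − n`: the episode obtained from `G` by removing node `n` and its incident edges. -/
noncomputable def Episode.erase {σ : Type} (G : Episode σ) (n : ℕ) : Episode σ where
  nodes := G.nodes.erase n
  edges := G.edges.filter (fun e => e.1 ≠ n ∧ e.2 ≠ n)
  lab := fun v hv => G.lab v (Finset.mem_of_mem_erase hv)
  edges_mem := by
    intro e he
    obtain ⟨he', h1, h2⟩ := Finset.mem_filter.1 he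
    exact ⟨Finset.mem_erase.2 ⟨h1, (G.edges_mem e he').1⟩,
      Finset.mem_erase.2 ⟨h2, (G.edges_mem e he').2⟩⟩
  acyclic := by
    intro v hv
    exact G.acyclic v
      (Relation.TransGen.mono (fun a b hab => (Finset.mem_filter.1 hab).1) _ _ hv)

/-- The empty episode. -/
def Episode.empty (σ : Type) : Episode σ where
  nodes := ∅
  edges := ∅
  lab := fun v hv => absurd hv (Finset.notMem_empty v)
  edges_mem := by intro e he; exact absurd he (Finset.notMem_empty e)
  acyclic := by
    intro v hv
    cases hv with
    | single h => exact absurd h (Finset.notMem_empty _)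
    | tail _ h => exact absurd h (Finset.notMem_empty _)

/-- A collection of episodes is downward closed if it contains every sub-episode of
each of its members (in particular the empty episode). -/
def DownwardClosed {σ : Type} (𝒢 : Finset (Episode σ)) : Prop :=
  ∀ G ∈ 𝒢, ∀ H : Episode σ, SubEpisode H G → H ∈ 𝒢

/-- The episode machine `M(𝒢)`: states are the episodes of `𝒢`, the empty episode is the
initial state, and there is an edge labeled `a` from `X` to `Y` whenever `X = Y − n` for a
sink node `n` of `Y` labeled `a`. -/
noncomputable def episodeMachine {σ : Type} [Fintype σ] (𝒢 : Finset (Episode σ)) :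
    Machine σ (Episode σ) where
  init := Episode.empty σ
  edges := (𝒢 ×ˢ (Finset.univ ×ˢ 𝒢)).filter
    (fun e => ∃ n, ∃ hn : n ∈ e.2.2.nodes,
      n ∈ e.2.2.sinks ∧ e.2.2.lab n hn = e.2.1 ∧ e.1 = e.2.2.erase n)

section Aux

variable {σ : Type}

lemma Episode.ext' {G H : Episode σ} (hn : G.nodes = H.nodes) (he : G.edges = H.edges)
    (hl : ∀ v (h1 : v ∈ G.nodes) (h2 : v ∈ H.nodes), G.lab v h1 = H.lab v h2) : G = H := by
  cases G with
  | mk n1 e1 l1 em1 a1 =>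
    cases H with
    | mk n2 e2 l2 em2 a2 =>
      dsimp at hn he hl
      subst hn; subst he
      have : l1 = l2 := by funext v h; exact hl v h h
      subst this
      rfl

lemma Episode.mem_sinks {G : Episode σ} {n : ℕ} :
    n ∈ G.sinks ↔ n ∈ G.nodes ∧ ∀ w, (n, w) ∉ G.edges := by
  simp [Episode.sinks, Finset.mem_filter]

lemma Episode.erase_comm (G : Episode σ) (n m : ℕ) :
    (G.erase n).erase m = (G.erase m).erase n := by
  apply Episode.ext'
  · simp [Episode.erase, Finset.erase_right_comm]
  · ext e; simp [Episode.erase, Finset.mem_filter]; tauto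
  · intro v h1 h2; rfl

lemma subEpisode_erase (G : Episode σ) (n : ℕ) : SubEpisode (G.erase n) G := by
  refine ⟨Finset.erase_subset _ _, Finset.filter_subset _ _, ?_⟩
  intro v hv hg; rfl

lemma episodeMachine_edge_iff {σ : Type} [Fintype σ] {𝒢 : Finset (Episode σ)}
    {X Y : Episode σ} {a : σ} :
    (episodeMachine 𝒢).IsEdge X a Y ↔ X ∈ 𝒢 ∧ Y ∈ 𝒢 ∧
      ∃ n, ∃ hn : n ∈ Y.nodes, n ∈ Y.sinks ∧ Y.lab n hn = a ∧ X = Y.erase n := by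
  simp [Machine.IsEdge, episodeMachine, Finset.mem_filter, Finset.mem_product]
  tauto

lemma reach_erase {σ : Type} [Fintype σ] {𝒢 : Finset (Episode σ)}
    (hdc : DownwardClosed 𝒢) {Y : Episode σ} {t : List σ}
    (hr : (episodeMachine 𝒢).Reach Y t) :
    ∀ n, n ∈ Y.sinks → Y ∈ 𝒢 →
      ∃ t', (episodeMachine 𝒢).Reach (Y.erase n) t' ∧ t'.Sublist t := by
  induction hr with
  | init =>
    intro n hn _
    rw [Episode.mem_sinks] at hn
    exact absurd hn.1 (Finset.notMem_empty n)
  | @step w v b t₀ hrw hedge ih =>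
    intro n hn hv
    obtain ⟨hw𝒢, hv𝒢, m, hm, hmsink, hmlab, hwe⟩ := episodeMachine_edge_iff.1 hedge
    by_cases hmn : m = n
    · subst hmn
      exact ⟨t₀, hwe ▸ hrw, List.sublist_append_left _ _⟩
    · -- n is a sink of w = v.erase m
      rw [Episode.mem_sinks] at hn hmsink
      have hnw : n ∈ w.sinks := by
        rw [hwe, Episode.mem_sinks]
        refine ⟨Finset.mem_erase.2 ⟨fun h => hmn (h ▸ rfl), hn.1⟩, ?_⟩
        intro u hu
        exact hn.2 u (Finset.filter_subset _ _ hu)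
      have hw𝒢' := hw𝒢
      obtain ⟨t₀', hr', hsub⟩ := ih n hnw hw𝒢
      -- now build edge from w.erase n = (v.erase n).erase m to v.erase n
      have hvn𝒢 : v.erase n ∈ 𝒢 := hdc v hv𝒢 _ (subEpisode_erase v n)
      have hvnm𝒢 : (v.erase n).erase m ∈ 𝒢 := hdc _ hvn𝒢 _ (subEpisode_erase _ m)
      have hmn' : m ∈ (v.erase n).nodes := Finset.mem_erase.2 ⟨hmn, hmsink.1⟩
      have hcomm : w.erase n = (v.erase n).erase m := by
        rw [hwe]; exact Episode.erase_comm v m n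
      have hedge' : (episodeMachine 𝒢).IsEdge (w.erase n) b (v.erase n) := by
        rw [episodeMachine_edge_iff]
        refine ⟨hcomm ▸ hvnm𝒢, hvn𝒢, m, hmn', ?_, ?_, hcomm⟩
        · rw [Episode.mem_sinks]
          refine ⟨hmn', fun u hu => hmsink.2 u (Finset.filter_subset _ _ hu)⟩
        · exact hmlab
      exact ⟨t₀' ++ [b], Machine.Reach.step hr' hedge',
        List.Sublist.append hsub (List.Sublist.refl _)⟩

end Aux

/-- for every downward-closed finite collection of episodes `𝒢`, the episode
machine `M(𝒢)` is monotonic. -/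
theorem episodeMachine_monotonic {σ : Type} [Fintype σ] (𝒢 : Finset (Episode σ))
    (hdc : DownwardClosed 𝒢) : (episodeMachine 𝒢).Monotonic := by
  intro v w a hedge s hcov
  obtain ⟨t, hrt, hts⟩ := hcov
  obtain ⟨hw𝒢, hv𝒢, n, hn, hsink, hlab, hwe⟩ := episodeMachine_edge_iff.1 hedge
  obtain ⟨t', hrt', hsub⟩ := reach_erase hdc hrt n hsink hv𝒢
  exact ⟨t', hwe ▸ hrt', hsub.trans hts⟩
end

section
/- Let M be a simple and monotonic machine over Σ, let v be a state of M, and let L ≥ 1. Writing P_k(x) for the probability that a random sequence of length k (independent symbols with distribution p) covers state x, one has P_L(v) − P_{L−1}(v) = Σ_{e=(w,v) an edge of M} p(lab(e)) · (P_{L−1}(w) − P_{L−1}(v)), where the sum ranges over all incoming edges e of v. -/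
open scoped Classical

/-- `coverProb M p k v`: the probability that a random sequence of length `k`, with
independent symbols each distributed according to `p`, covers the state `v` of `M`. -/
noncomputable def coverProb {σ Q : Type} [Fintype σ] (M : Machine σ Q) (p : σ → ℝ)
    (k : ℕ) (v : Q) : ℝ :=
  ∑ s : Fin k → σ, if M.CoversState (List.ofFn s) v then ∏ i, p (s i) else 0


lemma reach_concat {σ Q : Type} {M : Machine σ Q} {v : Q} {t : List σ} {a : σ}
    (h : M.Reach v (t ++ [a])) : ∃ w, M.Reach w t ∧ M.IsEdge w a v := by
  generalize ht : t ++ [a] = u at h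
  cases h with
  | init => simp at ht
  | step hr he =>
    obtain ⟨rfl, h2⟩ := List.append_inj' ht rfl
    injection h2 with h3 _
    subst h3
    exact ⟨_, hr, he⟩

lemma cover_concat {σ Q : Type} (M : Machine σ Q) (s : List σ) (a : σ) (v : Q) :
    M.CoversState (s ++ [a]) v ↔
      M.CoversState s v ∨ ∃ w, M.IsEdge w a v ∧ M.CoversState s w := by
  constructor
  · rintro ⟨t, hr, hsub⟩
    obtain ⟨l₁, l₂, rfl, h1, h2⟩ := List.sublist_append_iff.mp hsub
    rcases List.sublist_singleton.mp h2 with rfl | rfl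
    · exact Or.inl ⟨l₁ ++ [], by simpa using hr, by simpa using h1⟩
    · obtain ⟨w, hrw, he⟩ := reach_concat hr
      exact Or.inr ⟨w, he, ⟨l₁, hrw, h1⟩⟩
  · rintro (⟨t, hr, hsub⟩ | ⟨w, he, t, hr, hsub⟩)
    · exact ⟨t, hr, hsub.trans (List.sublist_append_left s [a])⟩
    · exact ⟨t ++ [a], hr.step he, hsub.append (List.Sublist.refl [a])⟩

lemma key {σ Q : Type} [Fintype σ] (M : Machine σ Q) (hsimple : M.Simple) (hmono : M.Monotonic)
    (p : σ → ℝ) (hp1 : ∑ a : σ, p a = 1) (v : Q) (l : List σ) (P : ℝ) :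
    (∑ a : σ, if M.CoversState (l ++ [a]) v then P * p a else 0)
      - (if M.CoversState l v then P else 0)
    = ∑ e ∈ M.edges.filter (fun e => e.2.2 = v),
        p e.2.1 * ((if M.CoversState l e.1 then P else 0)
          - (if M.CoversState l v then P else 0)) := by
  simp only [cover_concat]
  by_cases hC : M.CoversState l v
  · have h1 : ∀ a : σ, (if (M.CoversState l v ∨ ∃ w, M.IsEdge w a v ∧ M.CoversState l w)
        then P * p a else 0) = P * p a := fun a => if_pos (Or.inl hC)
    have h2 : ∀ e ∈ M.edges.filter (fun e => e.2.2 = v),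
        p e.2.1 * ((if M.CoversState l e.1 then P else 0)
          - P) = 0 := by
      intro e he
      obtain ⟨hee, hv⟩ := Finset.mem_filter.mp he
      have hedge : M.IsEdge e.1 e.2.1 v := by
        show (e.1, e.2.1, v) ∈ M.edges
        rw [← hv]; simpa using hee
      rw [if_pos (hmono v e.1 e.2.1 hedge l hC), sub_self, mul_zero]
    rw [Finset.sum_congr rfl (fun a _ => h1 a), ← Finset.mul_sum, hp1, mul_one, if_pos hC,
      Finset.sum_congr rfl h2, Finset.sum_const, smul_zero, sub_self]
  · have h1 : ∀ a : σ, (if (M.CoversState l v ∨ ∃ w, M.IsEdge w a v ∧ M.CoversState l w)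
        then P * p a else 0)
        = if (∃ w, M.IsEdge w a v ∧ M.CoversState l w) then p a * P else 0 := by
      intro a
      by_cases hD : ∃ w, M.IsEdge w a v ∧ M.CoversState l w
      · rw [if_pos (Or.inr hD), if_pos hD, mul_comm]
      · rw [if_neg (not_or.mpr ⟨hC, hD⟩), if_neg hD]
    have h2 : ∀ e ∈ M.edges.filter (fun e => e.2.2 = v),
        p e.2.1 * ((if M.CoversState l e.1 then P else 0)
          - 0)
        = if M.CoversState l e.1 then p e.2.1 * P else 0 := by
      intro e _
      rw [sub_zero]
      by_cases h : M.CoversState l e.1 <;> simp [h]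
    rw [Finset.sum_congr rfl (fun a _ => h1 a), if_neg hC, sub_zero,
      Finset.sum_congr rfl h2, ← Finset.sum_filter, ← Finset.sum_filter]
    set F := (M.edges.filter (fun e => e.2.2 = v)).filter (fun e => M.CoversState l e.1) with hF
    have hinj : ∀ e₁ ∈ F, ∀ e₂ ∈ F, e₁.2.1 = e₂.2.1 → e₁ = e₂ := by
      intro e₁ h₁ e₂ h₂ hlab
      simp only [hF, Finset.mem_filter] at h₁ h₂
      obtain ⟨⟨he₁, hv₁⟩, _⟩ := h₁
      obtain ⟨⟨he₂, hv₂⟩, _⟩ := h₂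
      have E₁ : M.IsEdge e₁.1 e₁.2.1 v := by
        show (e₁.1, e₁.2.1, v) ∈ M.edges; rw [← hv₁]; simpa using he₁
      have E₂ : M.IsEdge e₂.1 e₂.2.1 v := by
        show (e₂.1, e₂.2.1, v) ∈ M.edges; rw [← hv₂]; simpa using he₂
      have hw := hsimple v e₁.2.1 e₁.1 e₂.1 E₁ (hlab ▸ E₂)
      have g1 : e₁ = (e₁.1, e₁.2.1, e₁.2.2) := rfl
      have g2 : e₂ = (e₂.1, e₂.2.1, e₂.2.2) := rfl
      rw [g1, g2, hw, hlab, hv₁, hv₂]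
    have himg : Finset.univ.filter (fun a => ∃ w, M.IsEdge w a v ∧ M.CoversState l w)
        = F.image (fun e => e.2.1) := by
      ext a
      simp only [hF, Finset.mem_filter, Finset.mem_univ, true_and, Finset.mem_image]
      constructor
      · rintro ⟨w, he, hw⟩
        exact ⟨(w, a, v), ⟨⟨he, rfl⟩, hw⟩, rfl⟩
      · rintro ⟨e, ⟨⟨he, hv⟩, hcov⟩, rfl⟩
        refine ⟨e.1, ?_, hcov⟩
        show (e.1, e.2.1, v) ∈ M.edges; rw [← hv]; simpa using he
    rw [himg, Finset.sum_image hinj]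

/-- for a simple and monotonic machine `M`, a state `v` and `L ≥ 1`,
`P_L(v) − P_{L−1}(v) = Σ_{e=(w,v)} p(lab e) ⬝ (P_{L−1}(w) − P_{L−1}(v))`,
the sum ranging over all incoming edges of `v`. -/
theorem coverProb_succ_sub {σ Q : Type} [Fintype σ] [Fintype Q] (M : Machine σ Q)
    (hacyc : M.Acyclic) (hsrc : M.InitSource) (hsimple : M.Simple) (hmono : M.Monotonic)
    (p : σ → ℝ) (hp0 : ∀ a, 0 ≤ p a) (hp1 : ∑ a : σ, p a = 1)
    (v : Q) (L : ℕ) (hL : 1 ≤ L) :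
    coverProb M p L v - coverProb M p (L - 1) v =
      ∑ e ∈ M.edges.filter (fun e => e.2.2 = v),
        p e.2.1 * (coverProb M p (L - 1) e.1 - coverProb M p (L - 1) v) := by
  obtain ⟨n, rfl⟩ : ∃ n, L = n + 1 := ⟨L - 1, by omega⟩
  simp only [Nat.add_sub_cancel]
  have hrw : coverProb M p (n + 1) v
      = ∑ s' : Fin n → σ, ∑ a : σ,
        if M.CoversState (List.ofFn s' ++ [a]) v then (∏ i, p (s' i)) * p a else 0 := by
    rw [coverProb, ← Equiv.sum_comp (Fin.snocEquiv (fun _ => σ))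
      (fun s => if M.CoversState (List.ofFn s) v then ∏ i, p (s i) else 0),
      Fintype.sum_prod_type, Finset.sum_comm]
    apply Finset.sum_congr rfl; intro s' _
    apply Finset.sum_congr rfl; intro a _
    have hof : List.ofFn (Fin.snocEquiv (fun _ => σ) (a, s')) = List.ofFn s' ++ [a] := by
      show List.ofFn (Fin.snoc s' a) = _
      rw [List.ofFn_succ']
      simp [List.concat_eq_append]
    have hprod : (∏ i, p ((Fin.snocEquiv (fun _ => σ) (a, s')) i))
        = (∏ i, p (s' i)) * p a := by
      rw [Fin.prod_univ_castSucc]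
      simp [Fin.snocEquiv]
    rw [hof, hprod]
  have hcp : ∀ x : Q, coverProb M p n x
      = ∑ s' : Fin n → σ, if M.CoversState (List.ofFn s') x then ∏ i, p (s' i) else 0 :=
    fun x => rfl
  rw [hrw, hcp v, ← Finset.sum_sub_distrib,
    Finset.sum_congr rfl
      (fun s' _ => key M hsimple hmono p hp1 v (List.ofFn s') (∏ i, p (s' i))),
    Finset.sum_comm]
  apply Finset.sum_congr rfl
  intro e _
  rw [← Finset.mul_sum, Finset.sum_sub_distrib, hcp e.1]
end

section
/- Let M be a monotonic machine and let V = {v₁,…,v_N} be a state of the transformed machine S(M). A sequence s covers V in S(M) if and only if s covers at least one of the states v₁,…,v_N in M. -/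
open scoped Classical

namespace Machine

variable {σ Q : Type}

/-- `sub(V;a)`: the set of states from which an edge labeled `a` enters a member of `V`. -/
noncomputable def subSet [Fintype Q] (M : Machine σ Q) (V : Finset Q) (a : σ) : Finset Q :=
  Finset.univ.filter (fun w => ∃ v ∈ V, M.IsEdge w a v)

/-- `inc(V)`: the set of labels of all edges entering members of `V`. -/
noncomputable def inc (M : Machine σ Q) (V : Finset Q) : Finset σ :=
  (M.edges.filter (fun e => e.2.2 ∈ V)).image (fun e => e.2.1)

/-- `parent(V;a)`: the elements of `sub(V;a) ∪ V` having no strict ancestor inside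
`sub(V;a) ∪ V`. -/
noncomputable def parentSet [Fintype Q] (M : Machine σ Q) (V : Finset Q) (a : σ) :
    Finset Q :=
  (M.subSet V a ∪ V).filter (fun w => ∀ u ∈ M.subSet V a ∪ V, ¬ M.StrictAncestor u w)

/-- The transformed machine `S(M)` (on the state space of all sets of states of `M`):
for each set `V` and each `a ∈ inc(V)` there is an edge labeled `a` from `parent(V;a)`
to `V`; the initial state is `{i}`. -/
noncomputable def SMachine [Fintype σ] [Fintype Q] (M : Machine σ Q) :
    Machine σ (Finset Q) where
  init := {M.init}
  edges := Finset.univ.filter (fun e : Finset Q × σ × Finset Q =>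
    e.2.1 ∈ M.inc e.2.2 ∧ e.1 = M.parentSet e.2.2 e.2.1)

/-- `M.InClosure V U` holds iff `U ∈ closure(V)`, where
`closure(V) = {V} ∪ ⋃_{a ∈ inc(V)} closure(parent(V;a))`. -/
inductive InClosure [Fintype Q] (M : Machine σ Q) : Finset Q → Finset Q → Prop
  | refl (V : Finset Q) : InClosure M V V
  | step {V U : Finset Q} {a : σ} : a ∈ M.inc V → InClosure M (M.parentSet V a) U →
      InClosure M V U

/-- The states of the transformed machine `S(M)`: the union of `closure({v})` over all
states `v` of `M`. -/
def SStates [Fintype Q] (M : Machine σ Q) : Set (Finset Q) :=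
  {U | ∃ v : Q, M.InClosure {v} U}

end Machine

namespace Machine

variable {σ Q : Type}

lemma covers_init_always (M : Machine σ Q) (s : List σ) : M.CoversState s M.init :=
  ⟨[], .init, List.nil_sublist s⟩

lemma reach_nil_aux {M : Machine σ Q} {v : Q} {t : List σ} (h : M.Reach v t) :
    t = [] → v = M.init := by
  cases h with
  | init => exact fun _ => rfl
  | step _ _ => intro he; simp at he

lemma reach_nil {M : Machine σ Q} {v : Q} (h : M.Reach v []) : v = M.init :=
  reach_nil_aux h rfl

lemma covers_ancestor {M : Machine σ Q} (hmono : M.Monotonic) {u v : Q}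
    (h : M.StrictAncestor u v) {s : List σ} (hc : M.CoversState s v) : M.CoversState s u := by
  induction h with
  | single h' =>
    obtain ⟨a, ha⟩ := h'
    exact hmono _ _ _ ha s hc
  | tail _ h' ih =>
    obtain ⟨a, ha⟩ := h'
    exact ih (hmono _ _ _ ha s hc)

lemma init_strictAncestor {M : Machine σ Q} {u : Q} {t : List σ}
    (h : M.Reach u t) (hne : u ≠ M.init) : M.StrictAncestor M.init u := by
  induction h with
  | init => exact absurd rfl hne
  | @step w v a t hr he ih =>
    by_cases hw : w = M.init
    · exact Relation.TransGen.single ⟨a, hw ▸ he⟩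
    · exact (ih hw).tail ⟨a, he⟩

lemma mem_subSet [Fintype Q] {M : Machine σ Q} {V : Finset Q} {a : σ} {w : Q} :
    w ∈ M.subSet V a ↔ ∃ v ∈ V, M.IsEdge w a v := by
  simp [subSet]

lemma mem_inc {M : Machine σ Q} {V : Finset Q} {w v : Q} {a : σ}
    (he : M.IsEdge w a v) (hv : v ∈ V) : a ∈ M.inc V :=
  Finset.mem_image.2 ⟨(w, a, v), Finset.mem_filter.2 ⟨he, hv⟩, rfl⟩

lemma mem_parentSet [Fintype Q] {M : Machine σ Q} {V : Finset Q} {a : σ} {w : Q} :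
    w ∈ M.parentSet V a ↔ w ∈ M.subSet V a ∪ V ∧
      ∀ u ∈ M.subSet V a ∪ V, ¬ M.StrictAncestor u w := by
  simp [parentSet]

lemma mem_SM_edges [Fintype σ] [Fintype Q] {M : Machine σ Q} {W V : Finset Q} {a : σ} :
    M.SMachine.IsEdge W a V ↔ a ∈ M.inc V ∧ W = M.parentSet V a := by
  simp [SMachine, IsEdge]

lemma exists_minimal {M : Machine σ Q} [Fintype Q] (hacyc : M.Acyclic) (S : Finset Q) :
    ∀ w ∈ S, ∃ u ∈ S, (u = w ∨ M.StrictAncestor u w) ∧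
      ∀ x ∈ S, ¬ M.StrictAncestor x u := by
  haveI : IsTrans Q M.StrictAncestor := ⟨fun _ _ _ h1 h2 => h1.trans h2⟩
  haveI : IsIrrefl Q M.StrictAncestor := ⟨hacyc⟩
  have wf : WellFounded M.StrictAncestor := Finite.wellFounded_of_trans_of_irrefl _
  intro w
  induction w using wf.induction with
  | _ w ih =>
    intro hw
    by_cases h : ∃ x ∈ S, M.StrictAncestor x w
    · obtain ⟨x, hx, hxw⟩ := h
      obtain ⟨u, hu, hrel, hmin⟩ := ih x hxw hx
      refine ⟨u, hu, Or.inr ?_, hmin⟩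
      rcases hrel with h' | h'
      · rw [h']; exact hxw
      · exact h'.trans hxw
    · exact ⟨w, hw, Or.inl rfl, fun x hx hxw => h ⟨x, hx, hxw⟩⟩

lemma inClosure_append [Fintype Q] {M : Machine σ Q} {X Y : Finset Q} {a : σ}
    (h : M.InClosure X Y) (ha : a ∈ M.inc Y) : M.InClosure X (M.parentSet Y a) := by
  induction h with
  | refl V => exact .step ha (.refl _)
  | step hb _ ih => exact .step hb (ih ha)

lemma parentSet_mem_SStates [Fintype Q] {M : Machine σ Q} {V : Finset Q} {a : σ}
    (hV : V ∈ M.SStates) (ha : a ∈ M.inc V) : M.parentSet V a ∈ M.SStates := by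
  obtain ⟨v₀, h⟩ := hV
  exact ⟨v₀, inClosure_append h ha⟩

lemma closure_induct [Fintype Q] {M : Machine σ Q} (P : Finset Q → Prop)
    (hstep : ∀ X a, a ∈ M.inc X → P X → P (M.parentSet X a))
    {X U : Finset Q} (h : M.InClosure X U) : P X → P U := by
  induction h with
  | refl => exact id
  | step ha _ ih => exact fun hX => ih (hstep _ _ ha hX)

lemma antichain_of_mem_SStates [Fintype Q] {M : Machine σ Q} (hacyc : M.Acyclic)
    {V : Finset Q} (hV : V ∈ M.SStates) :
    ∀ u ∈ V, ∀ w ∈ V, ¬ M.StrictAncestor u w := by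
  obtain ⟨v₀, h⟩ := hV
  refine closure_induct (fun X => ∀ u ∈ X, ∀ w ∈ X, ¬ M.StrictAncestor u w) ?_ h ?_
  · intro X a _ _ u hu w hw
    exact (mem_parentSet.1 hw).2 u (mem_parentSet.1 hu).1
  · intro u hu w hw
    rw [Finset.mem_singleton] at hu hw
    subst hu; subst hw
    exact hacyc _

lemma reachable_all [Fintype Q] {M : Machine σ Q} (hmono : M.Monotonic)
    {V : Finset Q} (hV : V ∈ M.SStates)
    (hex : ∃ w ∈ V, ∃ t, M.Reach w t) : ∀ w ∈ V, ∃ t, M.Reach w t := by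
  obtain ⟨v₀, h⟩ := hV
  refine closure_induct
    (fun X => (∃ w ∈ X, ∃ t, M.Reach w t) → ∀ w ∈ X, ∃ t, M.Reach w t) ?_ h ?_ hex
  · intro X a _ hP hex'
    -- first: some element of X is reachable
    obtain ⟨w, hw, t, ht⟩ := hex'
    have hXreach : ∀ u ∈ X, ∃ t, M.Reach u t := by
      rcases Finset.mem_union.1 (mem_parentSet.1 hw).1 with hsub | hmem
      · obtain ⟨v, hv, he⟩ := mem_subSet.1 hsub
        exact hP ⟨v, hv, t ++ [a], ht.step he⟩
      · exact hP ⟨w, hmem, t, ht⟩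
    intro u hu
    rcases Finset.mem_union.1 (mem_parentSet.1 hu).1 with hsub | hmem
    · obtain ⟨v, hv, he⟩ := mem_subSet.1 hsub
      obtain ⟨t', ht'⟩ := hXreach v hv
      obtain ⟨t'', ht'', _⟩ := hmono v u _ he t' ⟨t', ht', List.Sublist.refl t'⟩
      exact ⟨t'', ht''⟩
    · exact hXreach u hmem
  · intro hex' w hw
    obtain ⟨w', hw', hr⟩ := hex'
    rw [Finset.mem_singleton] at hw hw'
    exact hw ▸ hw' ▸ hr

lemma singleton_of_init_mem [Fintype Q] {M : Machine σ Q} (hacyc : M.Acyclic)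
    (hmono : M.Monotonic) {V : Finset Q} (hV : V ∈ M.SStates) (hi : M.init ∈ V) :
    V = {M.init} := by
  have hall := reachable_all hmono hV ⟨M.init, hi, [], .init⟩
  have hanti := antichain_of_mem_SStates hacyc hV
  refine Finset.eq_singleton_iff_unique_mem.2 ⟨hi, fun u hu => ?_⟩
  by_contra hne
  obtain ⟨t, ht⟩ := hall u hu
  exact hanti M.init hi u hu (init_strictAncestor ht hne)

/-- Forward direction. -/
lemma fwd [Fintype σ] [Fintype Q] {M : Machine σ Q} {V : Finset Q} {u : List σ}
    (h : M.SMachine.Reach V u) : ∀ s : List σ, u.Sublist s → ∃ v ∈ V, M.CoversState s v := by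
  induction h with
  | init => exact fun s _ => ⟨M.init, Finset.mem_singleton_self _, covers_init_always M s⟩
  | @step W V a u' hr he ih =>
    intro s hsub
    obtain ⟨r₁, r₂, rfl, h₁, h₂⟩ := List.append_sublist_iff.1 hsub
    obtain ⟨w, hw, t, htr, hts⟩ := ih r₁ h₁
    obtain ⟨_, hWeq⟩ := mem_SM_edges.1 he
    subst hWeq
    rcases Finset.mem_union.1 (mem_parentSet.1 hw).1 with hsubm | hmem
    · obtain ⟨v, hv, hedge⟩ := mem_subSet.1 hsubm
      exact ⟨v, hv, t ++ [a], htr.step hedge,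
        List.Sublist.append hts h₂⟩
    · exact ⟨w, hmem, t, htr, hts.trans (List.sublist_append_left r₁ r₂)⟩

/-- Backward direction, by strong induction on the length bound. -/
lemma bwd [Fintype σ] [Fintype Q] {M : Machine σ Q} (hacyc : M.Acyclic)
    (hmono : M.Monotonic) :
    ∀ n (s : List σ), s.length ≤ n → ∀ V ∈ M.SStates, ∀ v ∈ V,
      M.CoversState s v → M.SMachine.CoversState s V := by
  intro n
  induction n with
  | zero =>
    intro s hs V hV v hv ⟨t, htr, hts⟩
    have hsnil : s = [] := List.length_eq_zero_iff.1 (Nat.le_zero.1 hs)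
    subst hsnil
    have htnil : t = [] := List.sublist_nil.1 hts
    subst htnil
    have hvinit : v = M.init := reach_nil htr
    have hVeq : V = {M.init} := singleton_of_init_mem hacyc hmono hV (hvinit ▸ hv)
    subst hVeq
    exact ⟨[], .init, List.Sublist.refl _⟩
  | succ n ih =>
    intro s hs V hV v hv ⟨t, htr, hts⟩
    by_cases hinit : M.init ∈ V
    · have hVeq : V = {M.init} := singleton_of_init_mem hacyc hmono hV hinit
      subst hVeq
      exact ⟨[], .init, List.nil_sublist s⟩
    · cases htr with
      | init => exact absurd hv hinit
      | @step w v a t₀ hrw hedge =>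
        have ha : a ∈ M.inc V := mem_inc hedge hv
        obtain ⟨r₁, r₂, rfl, h₁, h₂⟩ := List.append_sublist_iff.1 hts
        have hamem : a ∈ r₂ := h₂.subset (List.mem_singleton_self a)
        obtain ⟨p, q, rfl⟩ := List.append_of_mem hamem
        -- s₁ := r₁ ++ p
        have hwsub : w ∈ M.subSet V a ∪ V :=
          Finset.mem_union_left _ (mem_subSet.2 ⟨v, hv, hedge⟩)
        obtain ⟨u, hu, hrel, hmin⟩ := exists_minimal hacyc (M.subSet V a ∪ V) w hwsub
        have huP : u ∈ M.parentSet V a := mem_parentSet.2 ⟨hu, hmin⟩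
        have hcovw : M.CoversState (r₁ ++ p) w :=
          ⟨t₀, hrw, h₁.trans (List.sublist_append_left r₁ p)⟩
        have hcovu : M.CoversState (r₁ ++ p) u := by
          rcases hrel with h' | h'
          · rw [h']; exact hcovw
          · exact covers_ancestor hmono h' hcovw
        have hlen : (r₁ ++ p).length ≤ n := by
          have := hs
          simp only [List.length_append, List.length_cons] at this ⊢
          omega
        obtain ⟨u', hr', hsl'⟩ :=
          ih (r₁ ++ p) hlen (M.parentSet V a) (parentSet_mem_SStates hV ha) u huP hcovu
        refine ⟨u' ++ [a], hr'.step (mem_SM_edges.2 ⟨ha, rfl⟩), ?_⟩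
        have heq : (r₁ ++ p) ++ a :: q = r₁ ++ (p ++ a :: q) := by simp
        rw [← heq]
        exact List.Sublist.append hsl' (by simp)

end Machine


/-- for a monotonic machine `M` and a state `V = {v₁,…,v_N}` of `S(M)`,
a sequence `s` covers `V` in `S(M)` iff `s` covers at least one `vᵢ` in `M`. -/
theorem SMachine_covers_iff {σ Q : Type} [Fintype σ] [Fintype Q] (M : Machine σ Q)
    (hacyc : M.Acyclic) (hsrc : M.InitSource) (hmono : M.Monotonic)
    (V : Finset Q) (hV : V ∈ Machine.SStates M) (s : List σ) :
    (Machine.SMachine M).CoversState s V ↔ ∃ v ∈ V, M.CoversState s v := by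
  constructor
  · rintro ⟨u, hr, hsl⟩
    exact Machine.fwd hr s hsl
  · rintro ⟨v, hv, hc⟩
    exact Machine.bwd hacyc hmono s.length s le_rfl V hV v hv hc
end

section
/- Let M be a monotonic machine. A sequence s covers a state v of M if and only if s covers the state {v} of the transformed machine S(M). -/
open scoped Classical

section Aux

open Machine

variable {σ Q : Type}

/-- Covering is preserved upward to strict ancestors in a monotonic machine. -/
lemma aux_covers_of_ancestor (M : Machine σ Q) (hmono : M.Monotonic) {u v : Q}
    (h : M.StrictAncestor u v) (s : List σ) :
    M.CoversState s v → M.CoversState s u := by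
  induction h with
  | single h =>
    exact fun hc => by obtain ⟨a, ha⟩ := h; exact hmono _ _ _ ha s hc
  | tail h₁ h₂ ih =>
    exact fun hc => ih (by obtain ⟨a, ha⟩ := h₂; exact hmono _ _ _ ha s hc)

lemma aux_reach_nil' (M : Machine σ Q) {v : Q} {t : List σ} (h : M.Reach v t) :
    t = [] → v = M.init := by
  induction h with
  | init => intro _; rfl
  | step _ _ _ => intro he; simp at he

lemma aux_ancestor_init (M : Machine σ Q) {v : Q} {t : List σ} (h : M.Reach v t) :
    t ≠ [] → M.StrictAncestor M.init v := by
  induction h with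
  | init => intro h; exact absurd rfl h
  | @step w v a t h₁ h₂ ih =>
    intro _
    by_cases ht : t = []
    · have hw : w = M.init := aux_reach_nil' M h₁ ht
      subst hw
      exact Relation.TransGen.single ⟨a, h₂⟩
    · exact Relation.TransGen.tail (ih ht) ⟨a, h₂⟩

lemma aux_wf [Fintype Q] (M : Machine σ Q) (hacyc : M.Acyclic) :
    WellFounded M.StrictAncestor := by
  haveI : IsTrans Q M.StrictAncestor := ⟨fun _ _ _ h₁ h₂ => Relation.TransGen.trans h₁ h₂⟩
  haveI : IsIrrefl Q M.StrictAncestor := ⟨hacyc⟩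
  exact Finite.wellFounded_of_trans_of_irrefl _

/-- Every member of a finite set has a weak ancestor in the set that is topmost
(has no strict ancestor in the set). -/
lemma aux_exists_top [Fintype Q] (M : Machine σ Q) (hacyc : M.Acyclic) (S : Finset Q) :
    ∀ w ∈ S, ∃ u ∈ S, (u = w ∨ M.StrictAncestor u w) ∧
      ∀ x ∈ S, ¬ M.StrictAncestor x u := by
  intro w
  refine (aux_wf M hacyc).induction
    (C := fun w => w ∈ S → ∃ u ∈ S, (u = w ∨ M.StrictAncestor u w) ∧
      ∀ x ∈ S, ¬ M.StrictAncestor x u) w ?_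
  intro w ih hw
  by_cases h : ∃ x ∈ S, M.StrictAncestor x w
  · obtain ⟨x, hx, hxw⟩ := h
    obtain ⟨u, hu, hux, htop⟩ := ih x hxw hx
    refine ⟨u, hu, Or.inr ?_, htop⟩
    rcases hux with rfl | h'
    · exact hxw
    · exact h'.trans hxw
  · exact ⟨w, hw, Or.inl rfl, fun x hx hxw => h ⟨x, hx, hxw⟩⟩

lemma aux_sedge_iff [Fintype σ] [Fintype Q] (M : Machine σ Q) (P V : Finset Q) (a : σ) :
    (Machine.SMachine M).IsEdge P a V ↔ a ∈ M.inc V ∧ P = M.parentSet V a := by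
  simp [Machine.IsEdge, Machine.SMachine, Finset.mem_filter]

lemma aux_mem_inc (M : Machine σ Q) {V : Finset Q} {a : σ} {w v : Q}
    (hv : v ∈ V) (he : M.IsEdge w a v) : a ∈ M.inc V := by
  simp only [Machine.inc, Finset.mem_image, Finset.mem_filter]
  exact ⟨(w, a, v), ⟨he, hv⟩, rfl⟩

lemma aux_mem_sub [Fintype Q] (M : Machine σ Q) {V : Finset Q} {a : σ} {w v : Q}
    (hv : v ∈ V) (he : M.IsEdge w a v) : w ∈ M.subSet V a := by
  simp only [Machine.subSet, Finset.mem_filter, Finset.mem_univ, true_and]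
  exact ⟨v, hv, he⟩

/-- Forward direction: a cover of `V` in `S(M)` yields a cover of some member of `V`. -/
lemma aux_scovers_imp [Fintype σ] [Fintype Q] (M : Machine σ Q) {V : Finset Q}
    {r : List σ} (h : (Machine.SMachine M).Reach V r) :
    ∃ w ∈ V, M.CoversState r w := by
  induction h with
  | init =>
    refine ⟨M.init, ?_, [], Machine.Reach.init, List.nil_sublist _⟩
    show M.init ∈ ({M.init} : Finset Q)
    exact Finset.mem_singleton_self _
  | @step W V a t h₁ h₂ ih =>
    rw [aux_sedge_iff] at h₂
    obtain ⟨hainc, hWP⟩ := h₂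
    obtain ⟨w, hwW, t', ht'reach, ht'sub⟩ := ih
    subst hWP
    have hwS : w ∈ M.subSet V a ∪ V := (Finset.mem_filter.1 hwW).1
    rcases Finset.mem_union.1 hwS with hsub | hV
    · simp only [Machine.subSet, Finset.mem_filter, Finset.mem_univ, true_and] at hsub
      obtain ⟨v, hvV, he⟩ := hsub
      exact ⟨v, hvV, t' ++ [a], Machine.Reach.step ht'reach he,
        ht'sub.append (List.Sublist.refl [a])⟩
    · exact ⟨w, hV, t', ht'reach, ht'sub.trans (List.sublist_append_left t [a])⟩

lemma aux_snoc_split {α : Type*} {t : List α} {a : α} {s : List α}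
    (h : (t ++ [a]).Sublist s) : ∃ s₁ s₂, s = s₁ ++ a :: s₂ ∧ t.Sublist s₁ := by
  rw [List.append_sublist_iff] at h
  obtain ⟨r₁, r₂, rfl, h₁, h₂⟩ := h
  have ha : a ∈ r₂ := h₂.subset (by simp)
  obtain ⟨p, q, rfl⟩ := List.append_of_mem ha
  exact ⟨r₁ ++ p, q, by simp, h₁.trans (List.sublist_append_left r₁ p)⟩

/-- The case where the initial state belongs to an antichain of reachable states. -/
lemma aux_nil_case [Fintype σ] [Fintype Q] (M : Machine σ Q) {V : Finset Q}
    (hanti : ∀ x ∈ V, ∀ y ∈ V, ¬ M.StrictAncestor x y)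
    (hreach : ∀ x ∈ V, ∃ t, M.Reach x t) (hinit : M.init ∈ V) (s : List σ) :
    (Machine.SMachine M).CoversState s V := by
  have hV : V = {M.init} := by
    refine Finset.eq_singleton_iff_unique_mem.2 ⟨hinit, fun x hx => ?_⟩
    obtain ⟨t, ht⟩ := hreach x hx
    by_cases htn : t = []
    · exact aux_reach_nil' M ht htn
    · exact absurd (aux_ancestor_init M ht htn) (hanti _ hinit _ hx)
  subst hV
  exact ⟨[], Machine.Reach.init, List.nil_sublist s⟩

/-- Backward direction, by strong induction on the length of `s`. -/
lemma aux_covers_scovers [Fintype σ] [Fintype Q] (M : Machine σ Q)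
    (hacyc : M.Acyclic) (hmono : M.Monotonic) :
    ∀ n (s : List σ), s.length ≤ n → ∀ V : Finset Q,
      (∀ x ∈ V, ∀ y ∈ V, ¬ M.StrictAncestor x y) →
      (∀ x ∈ V, ∃ t, M.Reach x t) →
      (∃ w ∈ V, M.CoversState s w) →
      (Machine.SMachine M).CoversState s V := by
  intro n
  induction n with
  | zero =>
    intro s hs V hanti hreach ⟨w, hwV, t, hreach_t, hsub⟩
    have hs0 : s = [] := List.length_eq_zero_iff.1 (Nat.le_zero.1 hs)
    subst hs0
    have ht0 : t = [] := List.sublist_nil.1 hsub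
    have hw : w = M.init := aux_reach_nil' M hreach_t ht0
    subst hw
    exact aux_nil_case M hanti hreach hwV []
  | succ n ih =>
    intro s hs V hanti hreach ⟨w, hwV, t, hreach_t, hsub⟩
    cases hreach_t with
    | init => exact aux_nil_case M hanti hreach hwV s
    | @step w₀ _ a t₀ h₁ h₂ =>
      obtain ⟨s₁, s₂, rfl, hsub₁⟩ := aux_snoc_split hsub
      have ha_inc : a ∈ M.inc V := aux_mem_inc M hwV h₂
      have hw₀sub : w₀ ∈ M.subSet V a := aux_mem_sub M hwV h₂
      obtain ⟨u, huS, hu_anc, hu_top⟩ := aux_exists_top M hacyc (M.subSet V a ∪ V) w₀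
        (Finset.mem_union_left _ hw₀sub)
      have hu_par : u ∈ M.parentSet V a := Finset.mem_filter.2 ⟨huS, hu_top⟩
      have hcov_w₀ : M.CoversState s₁ w₀ := ⟨t₀, h₁, hsub₁⟩
      have hcov_u : M.CoversState s₁ u := by
        rcases hu_anc with rfl | hanc
        · exact hcov_w₀
        · exact aux_covers_of_ancestor M hmono hanc s₁ hcov_w₀
      have hP_anti : ∀ x ∈ M.parentSet V a, ∀ y ∈ M.parentSet V a,
          ¬ M.StrictAncestor x y :=
        fun x hx y hy => (Finset.mem_filter.1 hy).2 x (Finset.mem_filter.1 hx).1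
      have hP_reach : ∀ x ∈ M.parentSet V a, ∃ t, M.Reach x t := by
        intro x hx
        rcases Finset.mem_union.1 (Finset.mem_filter.1 hx).1 with hxs | hxV
        · simp only [Machine.subSet, Finset.mem_filter, Finset.mem_univ, true_and] at hxs
          obtain ⟨v', hv'V, he'⟩ := hxs
          obtain ⟨tv, htv⟩ := hreach v' hv'V
          obtain ⟨t', ht', _⟩ := hmono v' x a he' tv ⟨tv, htv, List.Sublist.refl _⟩
          exact ⟨t', ht'⟩
        · exact hreach x hxV
      have hlen : s₁.length ≤ n := by
        have := hs
        simp only [List.length_append, List.length_cons] at this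
        omega
      obtain ⟨r, hr, hrsub⟩ := ih s₁ hlen (M.parentSet V a) hP_anti hP_reach
        ⟨u, hu_par, hcov_u⟩
      refine ⟨r ++ [a], Machine.Reach.step hr ?_, ?_⟩
      · exact (aux_sedge_iff M _ V a).2 ⟨ha_inc, rfl⟩
      · exact hrsub.append (List.Sublist.cons₂ a (List.nil_sublist s₂))

end Aux

/-- for a monotonic machine `M`, a sequence `s` covers a state `v` of `M`
iff `s` covers the state `{v}` of the transformed machine `S(M)`. -/
theorem covers_iff_SMachine_covers_singleton {σ Q : Type} [Fintype σ] [Fintype Q]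
    (M : Machine σ Q) (hacyc : M.Acyclic) (hsrc : M.InitSource) (hmono : M.Monotonic)
    (v : Q) (s : List σ) :
    M.CoversState s v ↔ (Machine.SMachine M).CoversState s {v} := by
  constructor
  · intro h
    refine aux_covers_scovers M hacyc hmono s.length s le_rfl {v} ?_ ?_ ?_
    · intro x hx y hy
      rw [Finset.mem_singleton] at hx hy
      subst hx; subst hy
      exact hacyc _
    · intro x hx
      rw [Finset.mem_singleton] at hx
      subst hx
      obtain ⟨t, ht, _⟩ := h
      exact ⟨t, ht⟩
    · exact ⟨v, Finset.mem_singleton_self v, h⟩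
  · intro ⟨r, hr, hrsub⟩
    obtain ⟨w, hwv, t, ht, htsub⟩ := aux_scovers_imp M hr
    rw [Finset.mem_singleton] at hwv
    subst hwv
    exact ⟨t, ht, htsub.trans hrsub⟩
end

section
/- Let G be an episode and s a sequence, and let V be any collection of pairwise non-overlapping minimal windows of G in s. Then |V| ≤ |nm(G;s)|, the number of minimal windows selected by the greedy procedure. -/
open scoped Classical

/-- Two windows, given as 1-based inclusive index intervals, overlap if the
intervals intersect. -/
def Overlap (w x : ℕ × ℕ) : Prop := w.1 ≤ x.2 ∧ x.1 ≤ w.2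

/-- `w = (i,j)` is a minimal window of `G` in `s`: `s[i,j]` is a minimal window for `G`. -/
def MinWinAt {σ : Type} (G : Episode σ) (s : List σ) (w : ℕ × ℕ) : Prop :=
  1 ≤ w.1 ∧ w.1 ≤ w.2 ∧ w.2 ≤ s.length ∧ IsMinWindow (window s w.1 w.2) G

/-- The list of all minimal windows of `G` in `s`, in order of starting position. -/
noncomputable def minWinList {σ : Type} (G : Episode σ) (s : List σ) : List (ℕ × ℕ) :=
  ((List.range (s.length + 1)).flatMap (fun i =>
      (List.range (s.length + 1)).map (fun j => (i, j)))).filter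
    (fun w => MinWinAt G s w)

/-- Greedy selection: take the first window, discard all windows overlapping it, repeat. -/
noncomputable def greedy : List (ℕ × ℕ) → List (ℕ × ℕ)
  | [] => []
  | w :: rest => w :: greedy (rest.filter (fun x => ¬ Overlap w x))
termination_by l => l.length
decreasing_by
  simp only [List.length_cons]
  first
  | exact Nat.lt_succ_of_le (List.length_filter_le _ _)
  | exact Nat.lt_succ_of_le (by simpa using List.length_filter_le (fun x => decide ¬Overlap w ↑x) rest.attach)
  | (simp only [List.length_unattach, List.length_attach] at *; exact Nat.lt_succ_of_le ((List.length_filter_le _ _).trans (le_of_eq List.length_attach)))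
  | grind

/-- `nm G s`: the greedily chosen collection of non-overlapping minimal windows
of `G` in `s`. -/
noncomputable def nm {σ : Type} (G : Episode σ) (s : List σ) : List (ℕ × ℕ) :=
  greedy (minWinList G s)


lemma window_window {α : Type} (s : List α) (w1 w2 x1 x2 : ℕ) (h1 : 1 ≤ w1) (h2 : w1 ≤ x1)
    (h3 : x1 ≤ x2) (h4 : x2 ≤ w2) :
    window (window s w1 w2) (x1 - w1 + 1) (x2 - w1 + 1) = window s x1 x2 := by
  unfold window
  rw [List.take_drop, List.take_take, List.drop_drop]
  have e1 : w1 - 1 + (x2 - w1 + 1) = x2 := by omega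
  have e2 : min x2 w2 = x2 := by omega
  have e3 : w1 - 1 + (x1 - w1 + 1 - 1) = x1 - 1 := by omega
  rw [e1, e2, e3]

lemma minwin_nonnested {σ : Type} (G : Episode σ) (s : List σ) {w x : ℕ × ℕ}
    (hw : MinWinAt G s w) (hx : MinWinAt G s x) (h1 : w.1 ≤ x.1) (h2 : x.2 ≤ w.2) : w = x := by
  obtain ⟨hw1, hw12, hw2, hwcov, hwmin⟩ := hw
  obtain ⟨hx1, hx12, hx2, hxcov, -⟩ := hx
  by_contra hne
  have hlen : (window s w.1 w.2).length = w.2 - w.1 + 1 := by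
    simp [window]; omega
  have heq := window_window s w.1 w.2 x.1 x.2 hw1 h1 hx12 h2
  refine hwmin (x.1 - w.1 + 1) (x.2 - w.1 + 1) (by omega) (by omega) (by omega) ?_ ?_
  · rw [hlen]
    intro hc
    rw [Prod.mk.injEq] at hc
    exact hne (Prod.ext_iff.mpr ⟨by omega, by omega⟩)
  · rw [heq]; exact hxcov

lemma mem_minWinList {σ : Type} (G : Episode σ) (s : List σ) {v : ℕ × ℕ}
    (h : MinWinAt G s v) : v ∈ minWinList G s := by
  unfold minWinList
  rw [List.mem_filter]
  refine ⟨?_, by simpa using h⟩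
  rw [List.mem_flatMap]
  obtain ⟨h1, h2, h3, -⟩ := h
  refine ⟨v.1, by rw [List.mem_range]; omega, ?_⟩
  rw [List.mem_map]
  exact ⟨v.2, by rw [List.mem_range]; omega, by simp⟩

lemma minWinAt_of_mem {σ : Type} (G : Episode σ) (s : List σ) {v : ℕ × ℕ}
    (h : v ∈ minWinList G s) : MinWinAt G s v := by
  unfold minWinList at h
  rw [List.mem_filter] at h
  simpa using h.2

lemma minWinList_pairwise_lex {σ : Type} (G : Episode σ) (s : List σ) :
    (minWinList G s).Pairwise (fun a b => a.1 < b.1 ∨ (a.1 = b.1 ∧ a.2 < b.2)) := by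
  apply List.Pairwise.filter
  rw [List.pairwise_flatMap]
  constructor
  · intro a _
    rw [List.pairwise_map]
    exact (List.pairwise_lt_range).imp (fun h => Or.inr ⟨rfl, h⟩)
  · refine (List.pairwise_lt_range).imp ?_
    intro a b hab
    intro x hx y hy
    obtain ⟨j, -, rfl⟩ := List.mem_map.mp hx
    obtain ⟨k, -, rfl⟩ := List.mem_map.mp hy
    exact Or.inl hab

lemma minWinList_pairwise_R {σ : Type} (G : Episode σ) (s : List σ) :
    (minWinList G s).Pairwise (fun a b => a.1 ≤ b.1 ∧ a.2 ≤ b.2) := by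
  have hp := minWinList_pairwise_lex G s
  rw [List.pairwise_iff_forall_sublist] at hp ⊢
  intro a b hab
  have ha : a ∈ minWinList G s := hab.subset (by simp)
  have hb : b ∈ minWinList G s := hab.subset (by simp)
  have hlex := hp hab
  have h1 : a.1 ≤ b.1 := by rcases hlex with h | ⟨h, -⟩ <;> omega
  refine ⟨h1, ?_⟩
  by_contra hcon
  have := minwin_nonnested G s (minWinAt_of_mem G s ha) (minWinAt_of_mem G s hb) h1 (by omega)
  subst this
  rcases hlex with h | ⟨-, h⟩ <;> omega

lemma greedy_card_aux : ∀ n (l : List (ℕ × ℕ)), l.length ≤ n →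
    l.Pairwise (fun a b => a.1 ≤ b.1 ∧ a.2 ≤ b.2) →
    (∀ a ∈ l, a.1 ≤ a.2) →
    ∀ V : Finset (ℕ × ℕ), (∀ v ∈ V, v ∈ l) →
    (∀ w ∈ V, ∀ x ∈ V, w ≠ x → ¬ Overlap w x) →
    V.card ≤ (greedy l).length := by
  intro n
  induction n with
  | zero =>
    intro l hlen _ _ V hV _
    have hl : l = [] := List.length_eq_zero_iff.mp (Nat.le_zero.mp hlen)
    subst hl
    have : V = ∅ := Finset.eq_empty_of_forall_notMem (fun v hv => by simpa using hV v hv)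
    simp [this]
  | succ n ih =>
    intro l hlen hR hle V hV hd
    match l with
    | [] =>
      have : V = ∅ := Finset.eq_empty_of_forall_notMem (fun v hv => by simpa using hV v hv)
      simp [this]
    | w :: rest =>
      have hgr : greedy (w :: rest) = w :: greedy (rest.filter (fun x => ¬ Overlap w x)) := by
        rw [greedy]
      set rest' := rest.filter (fun x => ¬ Overlap w x) with hrest'
      obtain ⟨hRw, hRrest⟩ := List.pairwise_cons.mp hR
      have hR' : rest'.Pairwise (fun a b => a.1 ≤ b.1 ∧ a.2 ≤ b.2) := hRrest.filter _
      have hle' : ∀ a ∈ rest', a.1 ≤ a.2 := fun a ha =>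
        hle a (List.mem_cons_of_mem _ (List.mem_of_mem_filter ha))
      set V' := V.filter (fun v => ¬ Overlap w v) with hV'def
      have hV' : ∀ v ∈ V', v ∈ rest' := by
        intro v hv
        obtain ⟨hvV, hno⟩ := Finset.mem_filter.mp hv
        have hvl := hV v hvV
        have hvw : v ≠ w := by
          rintro rfl
          exact hno ⟨hle v hvl, hle v hvl⟩
        have hvr : v ∈ rest := by
          rcases List.mem_cons.mp hvl with h | h
          · exact absurd h hvw
          · exact h
        rw [hrest', List.mem_filter]
        exact ⟨hvr, by simpa using hno⟩
      have h1 : (V.filter (fun v => Overlap w v)).card ≤ 1 := by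
        rw [Finset.card_le_one]
        intro a ha b hb
        obtain ⟨haV, hao⟩ := Finset.mem_filter.mp ha
        obtain ⟨hbV, hbo⟩ := Finset.mem_filter.mp hb
        by_contra hne
        apply hd a haV b hbV hne
        by_cases haw : a = w
        · subst haw; exact hbo
        · by_cases hbw : b = w
          · subst hbw; exact ⟨hao.2, hao.1⟩
          · have har : a ∈ rest := by
              rcases List.mem_cons.mp (hV a haV) with h | h
              · exact absurd h haw
              · exact h
            have hbr : b ∈ rest := by
              rcases List.mem_cons.mp (hV b hbV) with h | h
              · exact absurd h hbw
              · exact h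
            obtain ⟨r1, r2⟩ := hRw a har
            obtain ⟨r3, r4⟩ := hRw b hbr
            obtain ⟨o1, o2⟩ := hao
            obtain ⟨o3, o4⟩ := hbo
            exact ⟨by omega, by omega⟩
      have hcard : V.card ≤ V'.card + 1 := by
        have := Finset.card_filter_add_card_filter_not (s := V)
          (p := fun v => Overlap w v)
        rw [hV'def]
        omega
      have hlen' : rest'.length ≤ n := by
        have hlf : rest'.length ≤ rest.length := List.length_filter_le _ _
        simp only [List.length_cons] at hlen
        omega
      have hdisj' : ∀ a ∈ V', ∀ b ∈ V', a ≠ b → ¬ Overlap a b := fun a ha b hb =>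
        hd a (Finset.filter_subset _ _ ha) b (Finset.filter_subset _ _ hb)
      have := ih rest' hlen' hR' hle' V' hV' hdisj'
      rw [hgr]
      simp only [List.length_cons]
      omega

/-- any collection `V` of pairwise non-overlapping minimal windows of `G`
in `s` satisfies `|V| ≤ |nm(G;s)|`. -/
theorem card_le_nm {σ : Type} (G : Episode σ) (s : List σ) (V : Finset (ℕ × ℕ))
    (hmin : ∀ w ∈ V, MinWinAt G s w)
    (hdisj : ∀ w ∈ V, ∀ x ∈ V, w ≠ x → ¬ Overlap w x) :
    V.card ≤ (nm G s).length := by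
  exact greedy_card_aux (minWinList G s).length (minWinList G s) le_rfl
    (minWinList_pairwise_R G s)
    (fun a ha => (minWinAt_of_mem G s ha).2.1)
    V (fun v hv => mem_minWinList G s (hmin v hv)) hdisj
end
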